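/- Let Q_j(n) be the number of white balls after n draws in the classical Pólya urn started with 1 black and j white balls. Then for integers j ≤ t ≤ j+n, P[Q_j(n) ≤ t] = ∏_{i=0}^{j-1} (t-i)/(n+j-i). -/

import Mathlib

open Finset

/-- Probability mass function of the number of white balls after `n` draws in the
classical Pólya urn started with `b` black and `w` white balls: each drawn ball is
returned together with one additional ball of the same color. -/
noncomputable def polyaPMF (b w : ℕ) : ℕ → ℕ → ℝ
  | 0 => fun k => if k = w then 1 else 0
  | n + 1 => fun k =>
      polyaPMF b w n k * (1 - (k : ℝ) / ((w + b + n : ℕ) : ℝ)) +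
      polyaPMF b w n (k - 1) * (((k : ℝ) - 1) / ((w + b + n : ℕ) : ℝ))

/-!
Conditioning on the last draw, `F_n(t) = P[Q_j(n) ≤ t]` satisfies
`F_{n+1}(t) = F_n(t) - P[Q_j(n) = t] · t / (n + j + 1)`. With the falling factorial
`P(x) = x (x - 1) ⋯ (x - j + 1)`, the candidate `P(t) / P(n + j)` obeys the same recursion,
because `P(x) · (x + 1) = P(x + 1) · (x + 1 - j)`, and it agrees with `F_n` on the edges:
both vanish for `t < j` and both equal `1` at `t = n + j`. Induction on `n` finishes.
-/

open Polynomial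

theorem descPochhammer_eval_mul_add_one {R : Type*} [CommRing R] (j : ℕ) (x : R) :
    (descPochhammer R j).eval x * (x + 1) = (descPochhammer R j).eval (x + 1) * (x + 1 - j) := by
  rw [← descPochhammer_succ_eval, descPochhammer_succ_left, eval_mul, eval_comp]
  simp only [eval_X, eval_sub, eval_one, add_sub_cancel_right]
  ring

theorem descPochhammer_div_sub_div_mul_div (j : ℕ) {x : ℝ} (hx : (j : ℝ) - 1 < x) (y : ℝ) :
    (descPochhammer ℝ j).eval (y + 1) / (descPochhammer ℝ j).eval x
        - ((descPochhammer ℝ j).eval (y + 1) / (descPochhammer ℝ j).eval x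
          - (descPochhammer ℝ j).eval y / (descPochhammer ℝ j).eval x) * (y + 1) / (x + 1)
      = (descPochhammer ℝ j).eval (y + 1) / (descPochhammer ℝ j).eval (x + 1) := by
  set P := descPochhammer ℝ j
  have hPx : 0 < P.eval x := descPochhammer_pos hx
  have hPx1 : 0 < P.eval (x + 1) := descPochhammer_pos (by linarith)
  have hx1 : 0 < x + 1 := by linarith [(j.cast_nonneg : (0 : ℝ) ≤ j)]
  field_simp
  linear_combination P.eval (x + 1) * descPochhammer_eval_mul_add_one j y
    - P.eval (y + 1) * descPochhammer_eval_mul_add_one j x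

noncomputable def polyaCDF (b w n t : ℕ) : ℝ :=
  ∑ k ∈ range (t + 1), polyaPMF b w n k

section

variable {b w : ℕ}

theorem polyaPMF_succ (n k : ℕ) :
    polyaPMF b w (n + 1) k = polyaPMF b w n k * (1 - (k : ℝ) / ((w + b + n : ℕ) : ℝ)) +
      polyaPMF b w n (k - 1) * (((k : ℝ) - 1) / ((w + b + n : ℕ) : ℝ)) :=
  rfl

theorem polyaPMF_eq_zero_of_lt {n k : ℕ} (h : k < w) : polyaPMF b w n k = 0 := by
  induction n generalizing k with
  | zero => simp [polyaPMF, h.ne]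
  | succ n ih => rw [polyaPMF_succ, ih h, ih (by omega : k - 1 < w)]; ring

theorem polyaPMF_eq_zero_of_gt {n k : ℕ} (h : w + n < k) : polyaPMF b w n k = 0 := by
  induction n generalizing k with
  | zero => simp [polyaPMF, show k ≠ w by omega]
  | succ n ih => rw [polyaPMF_succ, ih (k := k) (by omega), ih (k := k - 1) (by omega)]; ring

theorem polyaCDF_add_one (n t : ℕ) :
    polyaCDF b w n (t + 1) = polyaCDF b w n t + polyaPMF b w n (t + 1) :=
  sum_range_succ _ _

theorem polyaCDF_eq_zero_of_lt {n t : ℕ} (h : t < w) : polyaCDF b w n t = 0 :=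
  sum_eq_zero fun _ hk => polyaPMF_eq_zero_of_lt ((mem_range.mp hk).trans_le h)

theorem polyaCDF_succ (hw : 1 ≤ w) (n t : ℕ) :
    polyaCDF b w (n + 1) t
      = polyaCDF b w n t - polyaPMF b w n t * t / ((w + b + n : ℕ) : ℝ) := by
  induction t with
  -- `0 - 1 = 0` in `ℕ`, so at `t = 0` the recursion sees `p_n(0)`, which vanishes as `w ≥ 1`
  | zero => simp [polyaCDF, polyaPMF, polyaPMF_eq_zero_of_lt (n := n) (k := 0) hw]
  | succ t ih =>
    rw [polyaCDF_add_one, polyaCDF_add_one, ih, polyaPMF_succ, Nat.add_sub_cancel]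
    push_cast
    ring

theorem polyaCDF_eq_one (hw : 1 ≤ w) {n t : ℕ} (h : w + n ≤ t) : polyaCDF b w n t = 1 := by
  induction n with
  | zero =>
    rw [polyaCDF, polyaPMF, sum_ite_eq', if_pos (mem_range.mpr (by omega))]
  | succ n ih =>
    rw [polyaCDF_succ hw, ih (by omega), polyaPMF_eq_zero_of_gt (by omega)]
    simp

end

theorem polyaCDF_one_eq_div {j : ℕ} (hj : 1 ≤ j) {n t : ℕ} (ht : t ≤ j + n) :
    polyaCDF 1 j n t
      = (descPochhammer ℝ j).eval (t : ℝ) / (descPochhammer ℝ j).eval ((n : ℝ) + j) := by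
  have edge : ∀ n t, t < j ∨ t = j + n →
      polyaCDF 1 j n t
        = (descPochhammer ℝ j).eval (t : ℝ) / (descPochhammer ℝ j).eval ((n : ℝ) + j) := by
    rintro n t (htj | rfl)
    · rw [polyaCDF_eq_zero_of_lt htj, descPochhammer_eval_coe_nat_of_lt htj, zero_div]
    · rw [polyaCDF_eq_one hj le_rfl, Nat.cast_add, add_comm (j : ℝ), div_self]
      exact (descPochhammer_pos (by linarith [(n.cast_nonneg : (0 : ℝ) ≤ n)])).ne'
  induction n generalizing t with
  | zero => exact edge 0 t (by omega)
  | succ m ih =>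
    by_cases h : t < j ∨ t = j + (m + 1)
    · exact edge _ _ h
    obtain ⟨s, rfl⟩ : ∃ s, t = s + 1 := ⟨t - 1, by omega⟩
    have hpmf : polyaPMF 1 j m (s + 1) = polyaCDF 1 j m (s + 1) - polyaCDF 1 j m s := by
      rw [polyaCDF_add_one]; ring
    have key := descPochhammer_div_sub_div_mul_div j (x := (m : ℝ) + j)
      (by linarith [(m.cast_nonneg : (0 : ℝ) ≤ m)]) s
    rw [polyaCDF_succ hj, hpmf, ih (by omega), ih (by omega)]
    push_cast
    convert key using 3 <;> ring

theorem polya_cdf_general (j n t : ℕ) (hj : 1 ≤ j) (htn : t ≤ j + n) :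
    (∑ k ∈ range (t + 1), polyaPMF 1 j n k)
      = ∏ i ∈ range j, ((t : ℝ) - i) / ((n : ℝ) + j - i) := by
  rw [prod_div_distrib, ← descPochhammer_eval_eq_prod_range, ← descPochhammer_eval_eq_prod_range]
  exact polyaCDF_one_eq_div hj htn

/-- CDF of the classical Pólya urn started with `1` black and `j` white balls:
for `j ≤ t ≤ j + n`, `P[Q_j(n) ≤ t] = ∏_{i=0}^{j-1} (t-i)/(n+j-i)`. -/
theorem polya_cdf (j n t : ℕ) (hj : 1 ≤ j) (hjt : j ≤ t) (htn : t ≤ j + n) :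
    (∑ k ∈ range (t + 1), polyaPMF 1 j n k)
      = ∏ i ∈ range j, ((t : ℝ) - i) / ((n : ℝ) + j - i) :=
  polya_cdf_general j n t hj htn
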